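/- arXiv:1205.2784 — 3 statements merged into one kernel-verified Lean document; each statement's English description precedes it below -/
import Mathlib

section
/- If the hyperplane H_l is non-degenerate (ν_l ≠ 0), the Poincaré polynomial π(H, q) = Σ_{S⊆[n]} (−1)^{|S|} (1+q)^{dim V_S} satisfies π(H, q) = π(H − H_l, q) − (1+q)·π(H^{H_l}, q). -/
/-
Split the alternating sum over `S ⊆ [n]` according to whether `l ∈ S`. The subsets avoiding `l`
give `π(H − H_l)`. For `S = T ∪ {l}` the sign flips, and `V_S = V_T ⊔ ℝ ν_l` has dimension one
more than its image under the orthogonal projection `P` onto `ν_l^⊥`, because `P` kills exactly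
`ℝ ν_l`; that image is spanned by the `P νᵢ`, `i ∈ T`, so these subsets give `−(1+q) π(H^{H_l})`.
-/

open Polynomial

/-- The Poincaré polynomial `π(H, q) = Σ_{S⊆[n]} (−1)^{|S|} (1+q)^{dim V_S}` of the
arrangement determined by the vectors `ν i`, where `V_S = span {νᵢ : i ∈ S}`. -/
noncomputable def poincarePoly {V : Type*} [NormedAddCommGroup V] [InnerProductSpace ℝ V]
    {ι : Type*} [Fintype ι] [DecidableEq ι] (ν : ι → V) : Polynomial ℤ :=
  ∑ S : Finset ι, (-1 : Polynomial ℤ) ^ S.card *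
    (1 + X) ^ (Module.finrank ℝ ↥(Submodule.span ℝ (ν '' ↑S)))

theorem Submodule.finrank_sup_ker {K M N : Type*} [DivisionRing K] [AddCommGroup M] [Module K M]
    [AddCommGroup N] [Module K N] [FiniteDimensional K M] (f : M →ₗ[K] N) (A : Submodule K M) :
    Module.finrank K ↥(A ⊔ LinearMap.ker f) =
      Module.finrank K ↥(A.map f) + Module.finrank K ↥(LinearMap.ker f) := by
  have hrange : LinearMap.range (f.domRestrict (A ⊔ LinearMap.ker f)) = A.map f := by
    rw [LinearMap.range_domRestrict, Submodule.map_sup, LinearMap.le_ker_iff_map.mp le_rfl,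
      sup_bot_eq]
  have hker : Module.finrank K ↥(LinearMap.ker (f.domRestrict (A ⊔ LinearMap.ker f))) =
      Module.finrank K ↥(LinearMap.ker f) := by
    rw [LinearMap.ker_domRestrict]
    exact (Submodule.comapSubtypeEquivOfLe le_sup_right).finrank_eq
  rw [← hrange, ← hker, LinearMap.finrank_range_add_finrank_ker]

theorem finrank_span_insert_eq_finrank_span_image_orthogonalProjectionOnto_add_one {V : Type*}
    [NormedAddCommGroup V] [InnerProductSpace ℝ V] [FiniteDimensional ℝ V]
    {w : V} (hw : w ≠ 0) (s : Set V) :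
    Module.finrank ℝ ↥(Submodule.span ℝ (insert w s)) =
      Module.finrank ℝ ↥(Submodule.span ℝ
        ((fun v => ((ℝ ∙ w)ᗮ.orthogonalProjectionOnto v : V)) '' s)) + 1 := by
  have hker : LinearMap.ker ((ℝ ∙ w)ᗮ.starProjection : V →ₗ[ℝ] V) = ℝ ∙ w := by
    simp
  have h := Submodule.finrank_sup_ker ((ℝ ∙ w)ᗮ.starProjection : V →ₗ[ℝ] V) (Submodule.span ℝ s)
  rw [hker, finrank_span_singleton hw, ← Submodule.span_image] at h
  rwa [Submodule.span_insert, sup_comm]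

theorem Finset.sum_finset_eq_sum_subtype_ne_add_insert {ι M : Type*} [Fintype ι] [DecidableEq ι]
    [AddCommMonoid M] (l : ι) (f : Finset ι → M) :
    ∑ S, f S = ∑ T : Finset {i // i ≠ l},
      (f (T.map (.subtype _)) + f (insert l (T.map (.subtype _)))) := by
  have hpowerset : (univ.erase l).powerset =
      univ.map (mapEmbedding (Function.Embedding.subtype (· ≠ l))).toEmbedding := by
    ext t
    simp only [mem_powerset, mem_map, mem_univ, true_and, RelEmbedding.coe_toEmbedding,
      mapEmbedding_apply, ← filter_ne', ← univ_map_subtype, subset_map_iff, subset_univ]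
    exact exists_congr fun _ => eq_comm
  rw [sum_add_distrib, ← powerset_univ, ← insert_erase (mem_univ l),
    sum_powerset_insert (notMem_erase l univ), hpowerset, sum_map, sum_map]
  rfl

/-- If `ν_l ≠ 0`, the Poincaré polynomial satisfies
`π(H, q) = π(H − H_l, q) − (1+q)·π(H^{H_l}, q)`, where the restriction `H^{H_l}` is
given by the orthogonal projections of the remaining vectors onto `H_l = ν_l^⊥`. -/
theorem poincarePoly_deletion_restriction {V : Type*} [NormedAddCommGroup V]
    [InnerProductSpace ℝ V] [FiniteDimensional ℝ V]
    {n : ℕ} (ν : Fin n → V) (l : Fin n) (hl : ν l ≠ 0) :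
    poincarePoly ν =
      poincarePoly (fun i : {i : Fin n // i ≠ l} => ν i) -
        (1 + X) * poincarePoly (fun i : {i : Fin n // i ≠ l} =>
          (Submodule.orthogonalProjectionOnto ((ℝ ∙ ν l)ᗮ) (ν i) : V)) := by
  rw [poincarePoly, Finset.sum_finset_eq_sum_subtype_ne_add_insert l, poincarePoly, poincarePoly,
    Finset.mul_sum, ← Finset.sum_sub_distrib]
  refine Finset.sum_congr rfl fun T _ => ?_
  have hl_notMem : l ∉ T.map (.subtype _) := by simp
  rw [Finset.card_insert_of_notMem hl_notMem, Finset.coe_insert, Set.image_insert_eq,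
    finrank_span_insert_eq_finrank_span_image_orthogonalProjectionOnto_add_one hl, Finset.card_map,
    Finset.coe_map, Set.image_image, Set.image_image, Function.Embedding.coe_subtype]
  ring
end

section
/- The modified Tutte polynomial and the usual Tutte polynomial of a central arrangement in a k-dimensional space satisfy T̂(H; x, y) = (−1)^k (−x−1)^{dim H_{[n]}} T(H; −x, −y), where T(H; x, y) = Σ_{S⊆[n]} (x−1)^{dim H_S − dim H_{[n]}} (y−1)^{dim W_S}. -/
/-- The modified Tutte polynomial
`T̂(H; x, y) = Σ_{S⊆[n]} (−1)^{|S|} (1+x)^{dim H_S} (1+y)^{dim W_S}`, evaluated at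
real `x, y`, of the central arrangement determined by the vectors `ν i`. -/
noncomputable def tutteHatEval {V : Type*} [NormedAddCommGroup V] [InnerProductSpace ℝ V]
    {ι : Type*} [Fintype ι] [DecidableEq ι] (ν : ι → V) (x y : ℝ) : ℝ :=
  ∑ S : Finset ι, (-1 : ℝ) ^ S.card *
    (1 + x) ^ (Module.finrank ℝ ↥(⨅ i ∈ S, (ℝ ∙ ν i)ᗮ)) *
    (1 + y) ^ (Module.finrank ℝ
      ↥(LinearMap.ker (Fintype.linearCombination ℝ ν) ⊓
          ⨅ r ∈ Sᶜ, LinearMap.ker (LinearMap.proj (R := ℝ) (φ := fun _ : ι => ℝ) r)))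

/-- The usual Tutte polynomial
`T(H; x, y) = Σ_{S⊆[n]} (x−1)^{dim H_S − dim H_[n]} (y−1)^{dim W_S}`, evaluated at real
`x, y` (the exponent `dim H_S − dim H_[n]` is a natural number since `H_[n] ⊆ H_S`). -/
noncomputable def tutteEval {V : Type*} [NormedAddCommGroup V] [InnerProductSpace ℝ V]
    {ι : Type*} [Fintype ι] [DecidableEq ι] (ν : ι → V) (x y : ℝ) : ℝ :=
  ∑ S : Finset ι,
    (x - 1) ^ (Module.finrank ℝ ↥(⨅ i ∈ S, (ℝ ∙ ν i)ᗮ) -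
        Module.finrank ℝ ↥(⨅ i : ι, (ℝ ∙ ν i)ᗮ)) *
    (y - 1) ^ (Module.finrank ℝ
      ↥(LinearMap.ker (Fintype.linearCombination ℝ ν) ⊓
          ⨅ r ∈ Sᶜ, LinearMap.ker (LinearMap.proj (R := ℝ) (φ := fun _ : ι => ℝ) r)))

/-!
Both `dim H_S` and `dim W_S` are governed by `r(S) = dim span {ν i | i ∈ S}`: `H_S` is the
orthogonal complement of that span, so `dim H_S = k - r(S)`, and `W_S` is the kernel of
`c ↦ Σ c i ν i` on vectors supported on `S`, so `dim W_S = |S| - r(S)`. Hence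
`|S| + dim H_S = k + dim W_S`, which makes the two sums agree term by term.
-/

open Module Submodule LinearMap

theorem finrank_inf_ker_add_finrank_map {K M N : Type*} [Field K] [AddCommGroup M] [Module K M]
    [AddCommGroup N] [Module K N] [FiniteDimensional K M] (f : M →ₗ[K] N) (P : Submodule K M) :
    finrank K ↥(ker f ⊓ P) + finrank K ↥(P.map f) = finrank K P := by
  have h := (f.domRestrict P).finrank_range_add_finrank_ker
  rw [range_domRestrict, ker_domRestrict, ← finrank_map_subtype_eq, map_comap_subtype,
    inf_comm] at h
  omega

section SupportedOn

variable {K : Type*} [Field K] {ι : Type*} [Fintype ι] [DecidableEq ι]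

theorem finrank_iInf_ker_proj_compl (S : Finset ι) :
    finrank K ↥(⨅ r ∈ Sᶜ, ker (proj (R := K) (φ := fun _ : ι => K) r)) = S.card := by
  have e := iInfKerProjEquiv K (fun _ : ι => K) (I := S) (J := ↑Sᶜ)
    (by simp [disjoint_compl_right]) (by simp)
  exact e.finrank_eq.trans (by simp)

theorem map_linearCombination_iInf_ker_proj_compl {M : Type*} [AddCommGroup M] [Module K M]
    (ν : ι → M) (S : Finset ι) :
    (⨅ r ∈ Sᶜ, ker (proj (R := K) (φ := fun _ : ι => K) r)).map
      (Fintype.linearCombination K ν) = span K (ν '' S) := by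
  apply le_antisymm
  · rw [map_le_iff_le_comap]
    intro c hc
    simp only [Submodule.mem_iInf, mem_ker, proj_apply, Finset.mem_compl] at hc
    rw [mem_comap, Fintype.linearCombination_apply, ← Finset.sum_subset S.subset_univ
      (fun i _ hi => by simp [hc i hi])]
    exact Submodule.sum_mem _ fun i hi => smul_mem _ _ (subset_span ⟨i, hi, rfl⟩)
  · rw [span_le]
    rintro _ ⟨i, hi, rfl⟩
    refine mem_map.mpr ⟨Pi.single i 1, ?_, by simp⟩
    simp only [Submodule.mem_iInf, mem_ker, proj_apply, Finset.mem_compl]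
    intro r hr
    exact Pi.single_eq_of_ne (by rintro rfl; exact hr hi) _

end SupportedOn

theorem iInf_orthogonal_span_singleton_eq {𝕜 E ι : Type*} [RCLike 𝕜] [NormedAddCommGroup E]
    [InnerProductSpace 𝕜 E] (ν : ι → E) (s : Set ι) :
    ⨅ i ∈ s, (𝕜 ∙ ν i)ᗮ = (span 𝕜 (ν '' s))ᗮ := by
  rw [iInf_subtype', iInf_orthogonal, ← span_range_eq_iSup, ← Set.image_eq_range]

theorem card_add_finrank_iInf_orthogonal {𝕜 V ι : Type*} [RCLike 𝕜] [NormedAddCommGroup V]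
    [InnerProductSpace 𝕜 V] [FiniteDimensional 𝕜 V] [Fintype ι] [DecidableEq ι]
    (ν : ι → V) (S : Finset ι) :
    S.card + finrank 𝕜 ↥(⨅ i ∈ S, (𝕜 ∙ ν i)ᗮ) =
      finrank 𝕜 V + finrank 𝕜 ↥(ker (Fintype.linearCombination 𝕜 ν) ⊓
        ⨅ r ∈ Sᶜ, ker (proj (R := 𝕜) (φ := fun _ : ι => 𝕜) r)) := by
  have hW := finrank_inf_ker_add_finrank_map (Fintype.linearCombination 𝕜 ν)
    (⨅ r ∈ Sᶜ, ker (proj (R := 𝕜) (φ := fun _ : ι => 𝕜) r))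
  rw [map_linearCombination_iInf_ker_proj_compl, finrank_iInf_ker_proj_compl] at hW
  have hH := (span 𝕜 (ν '' S)).finrank_add_finrank_orthogonal
  rw [← iInf_orthogonal_span_singleton_eq] at hH
  -- replace the binder `i ∈ (S : Set ι)` by the definitionally equal `i ∈ S`
  change _ + finrank 𝕜 ↥(⨅ i ∈ S, (𝕜 ∙ ν i)ᗮ) = _ at hH
  omega

theorem neg_one_pow_mul_pow_mul_pow_eq {R : Type*} [CommRing R] {c a k b : ℕ}
    (h : c + a = k + b) (x y : R) :
    (-1) ^ c * (1 + x) ^ a * (1 + y) ^ b = (-1) ^ k * ((-x - 1) ^ a * (-y - 1) ^ b) := by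
  have hsign : (-1 : R) ^ c = (-1) ^ (k + b + a) := by
    rw [← h, pow_add, pow_add, mul_assoc, ← pow_add, ← two_mul, pow_mul]
    simp
  have hx : (-x - 1) ^ a = (-1) ^ a * (1 + x) ^ a := by rw [← mul_pow]; ring
  have hy : (-y - 1) ^ b = (-1) ^ b * (1 + y) ^ b := by rw [← mul_pow]; ring
  rw [hsign, hx, hy]
  ring

/-- For a central arrangement in a `k`-dimensional space,
`T̂(H; x, y) = (−1)^k (−x−1)^{dim H_[n]} T(H; −x, −y)`. -/
theorem tutteHat_eq_tutte {V : Type*} [NormedAddCommGroup V]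
    [InnerProductSpace ℝ V] [FiniteDimensional ℝ V]
    {n : ℕ} (ν : Fin n → V) (x y : ℝ) :
    tutteHatEval ν x y =
      (-1 : ℝ) ^ (Module.finrank ℝ V) *
        (-x - 1) ^ (Module.finrank ℝ ↥(⨅ i : Fin n, (ℝ ∙ ν i)ᗮ)) *
        tutteEval ν (-x) (-y) := by
  unfold tutteHatEval tutteEval
  rw [Finset.mul_sum]
  refine Finset.sum_congr rfl fun S _ => ?_
  have hle : finrank ℝ ↥(⨅ i : Fin n, (ℝ ∙ ν i)ᗮ) ≤ finrank ℝ ↥(⨅ i ∈ S, (ℝ ∙ ν i)ᗮ) :=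
    Submodule.finrank_mono (le_iInf₂ fun i _ => iInf_le _ i)
  rw [mul_assoc ((-1 : ℝ) ^ finrank ℝ V), ← mul_assoc ((-x - 1) ^ _), ← pow_add,
    Nat.add_sub_cancel' hle]
  exact neg_one_pow_mul_pow_mul_pow_eq (card_add_finrank_iInf_orthogonal ν S) x y
end

section
/- For a deletion-restriction triple, the dependency space of the restricted arrangement is canonically isomorphic to a dependency space of the original arrangement: for S ⊆ [n] − {l}, the map φ sending a dependency (w_s)_{s∈S} among the projections P(ν_s) onto H_l to the vector with those coordinates on S and coordinate −w_l in position l (where Σ_{s∈S} w_s ν_s = w_l ν_l) is a linear isomorphism W_S^{H_l} ≅ W_{S∪{l}}. -/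
open RealInnerProductSpace

/-! A vector `w` supported on `S` is a dependency among the projections `P ν_s` exactly when
`∑ w_s ν_s` lies on the line `ℝ ν_l`, i.e. equals `c w • ν_l`. Subtracting `c w` in the free
coordinate `l` makes it a dependency of `ν` supported on `S ∪ {l}`, and clearing the coordinate `l`
of such a dependency undoes this. All that matters is that `c` factors as `g ∘ L` through the
linear combination map `L` with `g (L e_l) = 1`. -/

theorem Fintype.linearCombination_comp {ι R M N : Type*} [Fintype ι] [Semiring R]
    [AddCommMonoid M] [Module R M] [AddCommMonoid N] [Module R N] (f : M →ₗ[R] N) (v : ι → M) :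
    Fintype.linearCombination R (f ∘ v) = f ∘ₗ Fintype.linearCombination R v := by
  ext w
  simp [Fintype.linearCombination_apply]

section Supported

variable {ι R M : Type*} [Fintype ι] [DecidableEq ι]

section Semiring

variable [Semiring R]

variable (R) in
def supportedOn (T : Finset ι) : Submodule R (ι → R) :=
  ⨅ r ∈ Tᶜ, LinearMap.ker (LinearMap.proj r)

theorem mem_supportedOn_iff {T : Finset ι} {w : ι → R} :
    w ∈ supportedOn R T ↔ ∀ r ∉ T, w r = 0 := by
  simp [supportedOn, Submodule.mem_iInf]

end Semiring

theorem bijOn_id_sub_toSpanSingleton_comp [Ring R] [AddCommGroup M] [Module R M]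
    (L : (ι → R) →ₗ[R] M) (g : M →ₗ[R] R) {l : ι}
    (hg : g (L (Pi.single l 1)) = 1) {S : Finset ι} (hS : l ∉ S) :
    Set.BijOn
      ⇑(LinearMap.id - LinearMap.toSpanSingleton R (ι → R) (Pi.single l 1) ∘ₗ g ∘ₗ L :
        (ι → R) →ₗ[R] ι → R)
      (((R ∙ L (Pi.single l 1)).comap L ⊓ supportedOn R S : Submodule R (ι → R)) : Set (ι → R))
      ((LinearMap.ker L ⊓ supportedOn R (insert l S) : Submodule R (ι → R)) : Set (ι → R)) := by
  set e : ι → R := Pi.single l 1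
  have he (r : ι) : e r = if r = l then 1 else 0 := Pi.single_apply l 1 r
  set φ := LinearMap.id - LinearMap.toSpanSingleton R (ι → R) e ∘ₗ g ∘ₗ L
  have hφ (w : ι → R) : φ w = w - g (L w) • e := rfl
  let ψ (u : ι → R) : ι → R := u - u l • e
  have hLψ {u : ι → R} (hu : L u = 0) : L (ψ u) = -u l • L e := by
    simp [ψ, hu]
  refine Set.InvOn.bijOn (f' := ψ) ⟨?_, ?_⟩ ?_ ?_
  · rintro w ⟨-, hw⟩
    have hwl : w l = 0 := mem_supportedOn_iff.mp hw l hS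
    ext r
    by_cases hr : r = l <;> simp [ψ, hφ, he, hr, hwl]
  · rintro u ⟨hu, -⟩
    rw [hφ, hLψ hu, map_smul, hg]
    simp [ψ]
  · rintro w ⟨hLw, hw⟩
    obtain ⟨t, ht⟩ := Submodule.mem_span_singleton.mp hLw
    have hgw : g (L w) = t := by rw [← ht, map_smul, hg, smul_eq_mul, mul_one]
    refine ⟨?_, mem_supportedOn_iff.mpr fun r hr => ?_⟩
    · rw [SetLike.mem_coe, LinearMap.mem_ker, hφ, map_sub, map_smul, hgw, ht, sub_self]
    · rw [Finset.mem_insert, not_or] at hr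
      simp [hφ, he, hr.1, mem_supportedOn_iff.mp hw r hr.2]
  · rintro u ⟨hu, hu'⟩
    refine ⟨Submodule.mem_span_singleton.mpr ⟨-u l, (hLψ hu).symm⟩,
      mem_supportedOn_iff.mpr fun r hr => ?_⟩
    by_cases hrl : r = l
    · simp [ψ, he, hrl]
    · simp [ψ, he, hrl, mem_supportedOn_iff.mp hu' r (by simp [hrl, hr])]

end Supported

theorem ker_linearCombination_orthogonalProjectionOnto_orthogonal {𝕜 V ι : Type*} [RCLike 𝕜]
    [NormedAddCommGroup V] [InnerProductSpace 𝕜 V] [Fintype ι] (K : Submodule 𝕜 V)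
    [K.HasOrthogonalProjection] (ν : ι → V) :
    LinearMap.ker
        (Fintype.linearCombination 𝕜 (fun i => (Kᗮ.orthogonalProjectionOnto (ν i) : V))) =
      K.comap (Fintype.linearCombination 𝕜 ν) := by
  ext w
  have h := LinearMap.congr_fun
    (Fintype.linearCombination_comp (Kᗮ.subtype ∘ₗ (Kᗮ.orthogonalProjectionOnto : V →ₗ[𝕜] Kᗮ)) ν) w
  simp only [Function.comp_def, LinearMap.comp_apply, Submodule.subtype_apply,
    ContinuousLinearMap.coe_coe] at h
  rw [LinearMap.mem_ker, Submodule.mem_comap, h, ZeroMemClass.coe_eq_zero,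
    Submodule.orthogonalProjectionOnto_eq_zero_iff, Submodule.orthogonal_orthogonal]

theorem restriction_dependency_space_iso_general {V : Type*} [NormedAddCommGroup V]
    [InnerProductSpace ℝ V]
    {n : ℕ} (ν : Fin n → V) (l : Fin n) (hl : ν l ≠ 0)
    (S : Finset (Fin n)) (hS : l ∉ S)
    -- the linear map computing `w_l` from `w`:
    (c : (Fin n → ℝ) →ₗ[ℝ] ℝ)
    (hc : c = (⟪ν l, ν l⟫)⁻¹ •
      ((innerSL ℝ (ν l)).toLinearMap ∘ₗ Fintype.linearCombination ℝ ν))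
    -- the linear map `φ : w ↦ w − w_l • e_l` (so `(φ w) l = −w_l` for `w` supported on `S`):
    (φ : (Fin n → ℝ) →ₗ[ℝ] (Fin n → ℝ))
    (hφ : φ = LinearMap.id -
      (LinearMap.toSpanSingleton ℝ (Fin n → ℝ) (Pi.single l 1)) ∘ₗ c) :
    Set.BijOn φ
      -- the space `W_S^{H_l}` of dependencies, supported on `S`, among the projections `P (ν s)`:
      ↑(LinearMap.ker (Fintype.linearCombination ℝ
            (fun i => (Submodule.orthogonalProjectionOnto ((ℝ ∙ ν l)ᗮ) (ν i) : V))) ⊓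
          ⨅ r ∈ Sᶜ, LinearMap.ker (LinearMap.proj (R := ℝ) (φ := fun _ : Fin n => ℝ) r))
      -- the space `W_{S∪{l}}` of dependencies of `ν` supported on `S ∪ {l}`:
      ↑(LinearMap.ker (Fintype.linearCombination ℝ ν) ⊓
          ⨅ r ∈ (insert l S)ᶜ,
            LinearMap.ker (LinearMap.proj (R := ℝ) (φ := fun _ : Fin n => ℝ) r)) := by
  set L := Fintype.linearCombination ℝ ν
  set g : V →ₗ[ℝ] ℝ := (⟪ν l, ν l⟫)⁻¹ • (innerSL ℝ (ν l)).toLinearMap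
  have hLe : L (Pi.single l 1) = ν l := by simp [L]
  have hg : g (L (Pi.single l 1)) = 1 := by simp [g, hLe, hl]
  have key := bijOn_id_sub_toSpanSingleton_comp L g hg hS
  rw [hLe] at key
  rw [hφ, hc, ker_linearCombination_orthogonalProjectionOnto_orthogonal, ← LinearMap.smul_comp]
  exact key

/-- For a deletion–restriction triple (with `ν_l ≠ 0`), the dependency
space of the restricted arrangement is canonically isomorphic to a dependency space of
the original arrangement.  The map `φ` sends a dependency `(w_s)_{s∈S}` among the
orthogonal projections `P(ν_s)` onto `H_l = ν_l^⊥` to the vector with the same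
coordinates on `S` and coordinate `−w_l` in position `l`, where
`Σ_{s∈S} w_s ν_s = w_l ν_l` (so `w_l = ⟪ν_l, Σᵢ wᵢ νᵢ⟫ / ⟪ν_l, ν_l⟫`).  This `φ` is a
linear map restricting to a bijection `W_S^{H_l} ≃ W_{S∪{l}}`, hence a linear
isomorphism. -/
theorem restriction_dependency_space_iso {V : Type*} [NormedAddCommGroup V]
    [InnerProductSpace ℝ V] [FiniteDimensional ℝ V]
    {n : ℕ} (ν : Fin n → V) (l : Fin n) (hl : ν l ≠ 0)
    (S : Finset (Fin n)) (hS : l ∉ S)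
    -- the linear map computing `w_l` from `w`:
    (c : (Fin n → ℝ) →ₗ[ℝ] ℝ)
    (hc : c = (⟪ν l, ν l⟫)⁻¹ •
      ((innerSL ℝ (ν l)).toLinearMap ∘ₗ Fintype.linearCombination ℝ ν))
    -- the linear map `φ : w ↦ w − w_l • e_l` (so `(φ w) l = −w_l` for `w` supported on `S`):
    (φ : (Fin n → ℝ) →ₗ[ℝ] (Fin n → ℝ))
    (hφ : φ = LinearMap.id -
      (LinearMap.toSpanSingleton ℝ (Fin n → ℝ) (Pi.single l 1)) ∘ₗ c) :
    Set.BijOn φ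
      -- the space `W_S^{H_l}` of dependencies, supported on `S`, among the projections `P (ν s)`:
      ↑(LinearMap.ker (Fintype.linearCombination ℝ
            (fun i => (Submodule.orthogonalProjectionOnto ((ℝ ∙ ν l)ᗮ) (ν i) : V))) ⊓
          ⨅ r ∈ Sᶜ, LinearMap.ker (LinearMap.proj (R := ℝ) (φ := fun _ : Fin n => ℝ) r))
      -- the space `W_{S∪{l}}` of dependencies of `ν` supported on `S ∪ {l}`:
      ↑(LinearMap.ker (Fintype.linearCombination ℝ ν) ⊓
          ⨅ r ∈ (insert l S)ᶜ,
            LinearMap.ker (LinearMap.proj (R := ℝ) (φ := fun _ : Fin n => ℝ) r)) :=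
  restriction_dependency_space_iso_general ν l hl S hS c hc φ hφ
end
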